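/- arXiv:0811.3776 — 2 statements merged into one kernel-verified Lean document; each statement's English description precedes it below -/
import Mathlib

section
/- If $A_\mathcal{D} - \lambda$ is bijective (in the setting of the reduction to the boundary) then its inverse equals $B(\lambda) + [1 - B(\lambda)(A-\lambda)] \circ F_\mathcal{D}(\lambda)^{-1} \circ T(\lambda)$, where $F_\mathcal{D}(\lambda)$ is the induced map $\mathcal{D}/\mathcal{D}_{\min} \to \mathbb{C}^d$, $[q(u)] \mapsto T(\lambda)(A-\lambda)u$, and $[1-B(\lambda)(A-\lambda)]$ is the induced map on the quotient. That is, the resolvent splits as $(A_\mathcal{D}-\lambda)^{-1} = B(\lambda) + G_\mathcal{D}(\lambda)$ with $G_\mathcal{D}(\lambda)$ of rank at most $\dim(\mathcal{D}/\mathcal{D}_{\min}) \le d$. -/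
/-!
Since `B(λ)` maps into `𝒟_min` and `(A - λ) B(λ) = 1 - K(λ) T(λ)`, the map `1 - B(λ)(A - λ)`
sends `𝒟` into `𝒟` and satisfies
`(A - λ)(1 - B(λ)(A - λ)) = K(λ) T(λ)(A - λ)`; on the quotient this reads `(A - λ) P = K F`.
Therefore `(A - λ)(B + P F⁻¹ T) = (1 - K T) + K T = 1`, while for `u ∈ 𝒟` we have
`F⁻¹ T (A - λ) u = [u]`, so `(B + P F⁻¹ T)(A - λ) u = B(A - λ) u + (u - B(A - λ) u) = u`.
The rank bounds hold because `G = P F⁻¹ T` factors through `𝒟/𝒟_min`, which `F` embeds in `ℂ^d`.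
-/

namespace BoundaryReduction

variable {R H V : Type*} [Ring R] [AddCommGroup H] [Module R H] [AddCommGroup V] [Module R V]
  {Dmin D : Submodule R H} {Alam B : H →ₗ[R] H} {K : V →ₗ[R] H} {T : H →ₗ[R] V}
  {P : (D ⧸ Dmin.comap D.subtype) →ₗ[R] H} {F : (D ⧸ Dmin.comap D.subtype) →ₗ[R] V}
  {Finv : V →ₗ[R] (D ⧸ Dmin.comap D.subtype)}

theorem correction_mem (hle : Dmin ≤ D) (hBmem : ∀ w, B w ∈ Dmin)
    (hP : ∀ u : D, P (Submodule.Quotient.mk u) = (u : H) - B (Alam u)) (q) : P q ∈ D := by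
  obtain ⟨u, rfl⟩ := Submodule.Quotient.mk_surjective _ q
  rw [hP]
  exact sub_mem u.2 (hle (hBmem _))

theorem apply_correction (hright : ∀ w, Alam (B w) + K (T w) = w)
    (hP : ∀ u : D, P (Submodule.Quotient.mk u) = (u : H) - B (Alam u))
    (hF : ∀ u : D, F (Submodule.Quotient.mk u) = T (Alam u)) (q) :
    Alam (P q) = K (F q) := by
  obtain ⟨u, rfl⟩ := Submodule.Quotient.mk_surjective _ q
  rw [hP, hF, map_sub, sub_eq_iff_eq_add', hright]

theorem resolvent_mem (hle : Dmin ≤ D) (hBmem : ∀ w, B w ∈ Dmin)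
    (hP : ∀ u : D, P (Submodule.Quotient.mk u) = (u : H) - B (Alam u)) (w : H) :
    B w + (P ∘ₗ Finv ∘ₗ T) w ∈ D :=
  add_mem (hle (hBmem w)) (correction_mem hle hBmem hP _)

theorem apply_resolvent (hright : ∀ w, Alam (B w) + K (T w) = w)
    (hP : ∀ u : D, P (Submodule.Quotient.mk u) = (u : H) - B (Alam u))
    (hF : ∀ u : D, F (Submodule.Quotient.mk u) = T (Alam u))
    (hFinv : ∀ v, F (Finv v) = v) (w : H) :
    Alam (B w + (P ∘ₗ Finv ∘ₗ T) w) = w := by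
  rw [map_add, LinearMap.comp_apply, LinearMap.comp_apply, apply_correction hright hP hF, hFinv,
    hright]

theorem resolvent_apply (hP : ∀ u : D, P (Submodule.Quotient.mk u) = (u : H) - B (Alam u))
    (hF : ∀ u : D, F (Submodule.Quotient.mk u) = T (Alam u))
    (hFinv : ∀ q, Finv (F q) = q) {u : H} (hu : u ∈ D) :
    B (Alam u) + (P ∘ₗ Finv ∘ₗ T) (Alam u) = u := by
  rw [LinearMap.comp_apply, LinearMap.comp_apply, ← hF ⟨u, hu⟩, hFinv, hP, add_sub_cancel]

end BoundaryReduction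

open BoundaryReduction in
/-- `Alam` is `A - λ`; `P` and `F` are the maps induced on `𝒟/𝒟_min` by `1 - B(λ)(A - λ)` and
`T(λ)(A - λ)`, and `Finv` is the inverse of `F`. -/
theorem stmt6_general {H : Type*} [AddCommGroup H] [Module ℂ H] (d : ℕ)
    (Dmin D : Submodule ℂ H) (hle : Dmin ≤ D)
    [FiniteDimensional ℂ (↥D ⧸ Dmin.comap D.subtype)]
    (Alam B : H →ₗ[ℂ] H) (K : (Fin d → ℂ) →ₗ[ℂ] H) (T : H →ₗ[ℂ] (Fin d → ℂ))
    (hBmem : ∀ w, B w ∈ Dmin)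
    (hright : ∀ w, Alam (B w) + K (T w) = w)
    (P : (↥D ⧸ Dmin.comap D.subtype) →ₗ[ℂ] H)
    (hP : ∀ u : ↥D, P (Submodule.Quotient.mk u) = (u : H) - B (Alam (u : H)))
    (F : (↥D ⧸ Dmin.comap D.subtype) →ₗ[ℂ] (Fin d → ℂ))
    (hF : ∀ u : ↥D, F (Submodule.Quotient.mk u) = T (Alam (u : H)))
    (Finv : (Fin d → ℂ) →ₗ[ℂ] (↥D ⧸ Dmin.comap D.subtype))
    (hFinv₁ : ∀ q, Finv (F q) = q) (hFinv₂ : ∀ v, F (Finv v) = v) :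
    (∀ w, B w + (P ∘ₗ Finv ∘ₗ T) w ∈ D) ∧
    (∀ w, Alam (B w + (P ∘ₗ Finv ∘ₗ T) w) = w) ∧
    (∀ u ∈ D, B (Alam u) + (P ∘ₗ Finv ∘ₗ T) (Alam u) = u) ∧
    Module.finrank ℂ ↥(LinearMap.range (P ∘ₗ Finv ∘ₗ T))
      ≤ Module.finrank ℂ (↥D ⧸ Dmin.comap D.subtype) ∧
    Module.finrank ℂ (↥D ⧸ Dmin.comap D.subtype) ≤ d :=
  ⟨resolvent_mem hle hBmem hP,
    apply_resolvent hright hP hF hFinv₂,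
    fun _ hu => resolvent_apply hP hF hFinv₁ hu,
    (Submodule.finrank_mono (LinearMap.range_comp_le_range _ P)).trans (P.finrank_range_le),
    (LinearMap.finrank_le_finrank_of_injective (Function.LeftInverse.injective hFinv₁)).trans_eq
      (Module.finrank_fin_fun ℂ)⟩

/-- Splitting of the resolvent: if `A_𝒟 - λ` is bijective then its inverse equals
`B(λ) + G_𝒟(λ)` where `G_𝒟(λ) = [1 - B(λ)(A-λ)] ∘ F_𝒟(λ)⁻¹ ∘ T(λ)` is of rank at most
`dim 𝒟/𝒟_min ≤ d`.  Here `Alam` stands for the operator `A - λ`, `P` is the induced map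
`[1 - B(λ)(A-λ)]` on `𝒟/𝒟_min`, `F` the induced map `[T(λ)(A-λ)]`, and `Finv` its inverse. -/
theorem stmt6 {H : Type*} [AddCommGroup H] [Module ℂ H] (d : ℕ)
    (Dmin D : Submodule ℂ H) (hle : Dmin ≤ D)
    [FiniteDimensional ℂ (↥D ⧸ Dmin.comap D.subtype)]
    (Alam B : H →ₗ[ℂ] H) (K : (Fin d → ℂ) →ₗ[ℂ] H) (T : H →ₗ[ℂ] (Fin d → ℂ))
    (hBmem : ∀ w, B w ∈ Dmin)
    (hBA : ∀ u ∈ Dmin, B (Alam u) = u)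
    (hTA : ∀ u ∈ Dmin, T (Alam u) = 0)
    (hright : ∀ w, Alam (B w) + K (T w) = w)
    (P : (↥D ⧸ Dmin.comap D.subtype) →ₗ[ℂ] H)
    (hP : ∀ u : ↥D, P (Submodule.Quotient.mk u) = (u : H) - B (Alam (u : H)))
    (F : (↥D ⧸ Dmin.comap D.subtype) →ₗ[ℂ] (Fin d → ℂ))
    (hF : ∀ u : ↥D, F (Submodule.Quotient.mk u) = T (Alam (u : H)))
    (Finv : (Fin d → ℂ) →ₗ[ℂ] (↥D ⧸ Dmin.comap D.subtype))
    (hFinv₁ : ∀ q, Finv (F q) = q) (hFinv₂ : ∀ v, F (Finv v) = v)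
    (hbij : Function.Bijective (fun u : D => Alam (u : H))) :
    (∀ w, B w + (P ∘ₗ Finv ∘ₗ T) w ∈ D) ∧
    (∀ w, Alam (B w + (P ∘ₗ Finv ∘ₗ T) w) = w) ∧
    (∀ u ∈ D, B (Alam u) + (P ∘ₗ Finv ∘ₗ T) (Alam u) = u) ∧
    Module.finrank ℂ ↥(LinearMap.range (P ∘ₗ Finv ∘ₗ T))
      ≤ Module.finrank ℂ (↥D ⧸ Dmin.comap D.subtype) ∧
    Module.finrank ℂ (↥D ⧸ Dmin.comap D.subtype) ≤ d :=
  stmt6_general d Dmin D hle Alam B K T hBmem hright P hP F hF Finv hFinv₁ hFinv₂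
end

section
/- Let $H$ be a Hilbert space and $A : \mathcal{D}_{\max} \subseteq H \to H$ a closed operator with closed restrictions $A_{\mathcal{D}}$ to intermediate domains $\mathcal{D}_{\min} \subseteq \mathcal{D} \subseteq \mathcal{D}_{\max}$. Suppose $\dim \mathcal{D}_{\max}/\mathcal{D}_{\min} < \infty$ and $A_{\mathcal{D}_{\min}}$ is Fredholm. Then for every intermediate subspace $\mathcal{D}$, the operator $A_{\mathcal{D}}$ is Fredholm and $\mathrm{Ind}\, A_{\mathcal{D}} = \mathrm{Ind}\, A_{\mathcal{D}_{\min}} + \dim \mathcal{D}/\mathcal{D}_{\min}$. -/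
/-!
Restricting `A_𝒟` to `𝒟_min` is precomposing it with the inclusion `𝒟_min → 𝒟`, an injective
map with cokernel `𝒟/𝒟_min`, of index `-dim 𝒟/𝒟_min`. Since `𝒟/𝒟_min ⊆ 𝒟_max/𝒟_min` is finite
dimensional, kernel and cokernel of `A_𝒟` stay finite dimensional, and the index is additive
under composition. The range of `A_𝒟` contains the closed range of `A_{𝒟_min}`, which has finite
codimension, so it is closed too.
-/

open Module Submodule

namespace LinearMap

variable {k L M N : Type*} [DivisionRing k] [AddCommGroup L] [Module k L]
  [AddCommGroup M] [Module k M] [AddCommGroup N] [Module k N]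

/-- `ker f ⊓ range g = g (ker (f ∘ g))`, and `ker f` modulo it embeds into `M ⧸ range g`. -/
lemma finiteDimensional_ker_of_comp (f : M →ₗ[k] N) (g : L →ₗ[k] M)
    [FiniteDimensional k (ker (f ∘ₗ g))] [FiniteDimensional k (M ⧸ range g)] :
    FiniteDimensional k (ker f) := by
  have h_inf : ker f ⊓ ker (range g).mkQ = (ker (f ∘ₗ g)).map g := by
    rw [ker_mkQ, ker_comp, map_comap_eq, inf_comm]
  refine Module.Finite.iff_fg.mpr <| fg_of_fg_map_of_fg_inf_ker (range g).mkQ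
    (IsNoetherian.noetherian _) ?_
  rw [h_inf]
  exact (Module.Finite.iff_fg.mp inferInstance).map g

lemma finiteDimensional_coker_of_comp (f : M →ₗ[k] N) (g : L →ₗ[k] M)
    [FiniteDimensional k (N ⧸ range (f ∘ₗ g))] :
    FiniteDimensional k (N ⧸ range f) :=
  Module.Finite.of_surjective _ (factor_surjective (range_comp_le_range g f))

end LinearMap

namespace Submodule

variable {k M : Type*} [DivisionRing k] [AddCommGroup M] [Module k M]

section Inclusion

variable {p q : Submodule k M} (h : p ≤ q)

instance : FiniteDimensional k (LinearMap.ker (inclusion h)) := by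
  rw [ker_inclusion]
  infer_instance

instance [FiniteDimensional k (q ⧸ p.comap q.subtype)] :
    FiniteDimensional k (q ⧸ LinearMap.range (inclusion h)) := by
  rwa [range_inclusion]

lemma index_inclusion :
    (inclusion h).index = -finrank k (q ⧸ p.comap q.subtype) := by
  rw [LinearMap.index_of_injective (inclusion_injective h), range_inclusion]

end Inclusion

lemma finiteDimensional_quotient_comap_subtype_of_le {p q r : Submodule k M} (hqr : q ≤ r)
    [FiniteDimensional k (r ⧸ p.comap r.subtype)] :
    FiniteDimensional k (q ⧸ p.comap q.subtype) := by
  refine Module.Finite.of_injective ((p.comap q.subtype).mapQ (p.comap r.subtype)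
    (inclusion hqr) fun _ hx => by simpa using hx) ?_
  rw [← LinearMap.ker_eq_bot, ker_mapQ]
  exact mkQ_map_self _

end Submodule

theorem stmt18_general {H : Type*} [NormedAddCommGroup H] [InnerProductSpace ℂ H]
    (Dmin D Dmax : Submodule ℂ H) (h1 : Dmin ≤ D) (h2 : D ≤ Dmax)
    (A : H →ₗ[ℂ] H)
    [FiniteDimensional ℂ (↥Dmax ⧸ Dmin.comap Dmax.subtype)]
    (hker : FiniteDimensional ℂ ↥(LinearMap.ker (A.domRestrict Dmin)))
    (hcoker : FiniteDimensional ℂ (H ⧸ LinearMap.range (A.domRestrict Dmin)))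
    (hclosedrange : IsClosed ((LinearMap.range (A.domRestrict Dmin) : Submodule ℂ H) : Set H)) :
    (FiniteDimensional ℂ ↥(LinearMap.ker (A.domRestrict D)) ∧
      FiniteDimensional ℂ (H ⧸ LinearMap.range (A.domRestrict D)) ∧
      IsClosed ((LinearMap.range (A.domRestrict D) : Submodule ℂ H) : Set H)) ∧
    (Module.finrank ℂ ↥(LinearMap.ker (A.domRestrict D)) : ℤ)
        - Module.finrank ℂ (H ⧸ LinearMap.range (A.domRestrict D))
      = ((Module.finrank ℂ ↥(LinearMap.ker (A.domRestrict Dmin)) : ℤ)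
          - Module.finrank ℂ (H ⧸ LinearMap.range (A.domRestrict Dmin)))
        + Module.finrank ℂ (↥D ⧸ Dmin.comap D.subtype) := by
  have h_comp : A.domRestrict Dmin = A.domRestrict D ∘ₗ inclusion h1 := rfl
  rw [h_comp] at hker hcoker hclosedrange ⊢
  have := finiteDimensional_quotient_comap_subtype_of_le (p := Dmin) h2
  have h_ker := LinearMap.finiteDimensional_ker_of_comp (A.domRestrict D) (inclusion h1)
  have h_coker := LinearMap.finiteDimensional_coker_of_comp (A.domRestrict D) (inclusion h1)
  refine ⟨⟨h_ker, h_coker, isClosed_mono_of_finiteDimensional_quotient hclosedrange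
    (LinearMap.range_comp_le_range _ _)⟩, ?_⟩
  change (A.domRestrict D).index = (A.domRestrict D ∘ₗ inclusion h1).index + _
  rw [LinearMap.index_comp, index_inclusion]
  ring

/-- Relative index formula: if `𝒟_min ⊆ 𝒟 ⊆ 𝒟_max`, `dim 𝒟_max/𝒟_min < ∞`, and
`A_{𝒟_min}` is Fredholm (finite-dimensional kernel and cokernel, closed range), then
`A_𝒟` is Fredholm and `Ind A_𝒟 = Ind A_{𝒟_min} + dim 𝒟/𝒟_min`. -/
theorem stmt18 {H : Type*} [NormedAddCommGroup H] [InnerProductSpace ℂ H] [CompleteSpace H]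
    (Dmin D Dmax : Submodule ℂ H) (h1 : Dmin ≤ D) (h2 : D ≤ Dmax)
    (A : H →ₗ[ℂ] H)
    (hclosed : IsClosed {p : H × H | p.1 ∈ Dmax ∧ p.2 = A p.1})
    [FiniteDimensional ℂ (↥Dmax ⧸ Dmin.comap Dmax.subtype)]
    (hker : FiniteDimensional ℂ ↥(LinearMap.ker (A.domRestrict Dmin)))
    (hcoker : FiniteDimensional ℂ (H ⧸ LinearMap.range (A.domRestrict Dmin)))
    (hclosedrange : IsClosed ((LinearMap.range (A.domRestrict Dmin) : Submodule ℂ H) : Set H)) :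
    (FiniteDimensional ℂ ↥(LinearMap.ker (A.domRestrict D)) ∧
      FiniteDimensional ℂ (H ⧸ LinearMap.range (A.domRestrict D)) ∧
      IsClosed ((LinearMap.range (A.domRestrict D) : Submodule ℂ H) : Set H)) ∧
    (Module.finrank ℂ ↥(LinearMap.ker (A.domRestrict D)) : ℤ)
        - Module.finrank ℂ (H ⧸ LinearMap.range (A.domRestrict D))
      = ((Module.finrank ℂ ↥(LinearMap.ker (A.domRestrict Dmin)) : ℤ)
          - Module.finrank ℂ (H ⧸ LinearMap.range (A.domRestrict Dmin)))
        + Module.finrank ℂ (↥D ⧸ Dmin.comap D.subtype) :=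
  stmt18_general Dmin D Dmax h1 h2 A hker hcoker hclosedrange
end
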